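/- arXiv:1506.01462 — 3 statements merged into one kernel-verified Lean document; each statement's English description precedes it below -/
import Mathlib

section
/- Let Q ∈ 𝒬₀ admit a spectral decomposition Q = λ₁ n₁⊗n₁ + λ₂ n₂⊗n₂ + λ₃ n₃⊗n₃, where n₁, n₂, n₃ is an orthonormal basis of ℝ³ and λ₁ + λ₂ + λ₃ = 0. Then J(Q) ∈ 𝒬₀ and J(Q) : (n₃⊗v + v⊗n₃) = 0 for every v ∈ ℝ³ with v·n₃ = 0; that is, J(Q) is Frobenius-orthogonal to the tangent space T_P𝒩 = { n₃⊗v + v⊗n₃ : v·n₃ = 0 } at P = s₊(n₃⊗n₃ − Id/3) ∈ 𝒩. -/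
open Matrix Finset

noncomputable section

abbrev Mat := Matrix (Fin 3) (Fin 3) ℝ
abbrev Vec3 := Fin 3 → ℝ

/-- The Frobenius inner product `A : B`. -/
def frob (A B : Mat) : ℝ := ∑ i : Fin 3, ∑ j : Fin 3, A i j * B i j

/-- The squared Frobenius norm `|A|²`. -/
def mnormSq (A : Mat) : ℝ := frob A A

/-- `s₊ = (b + √(b² + 24 a c)) / (4c)`. -/
def sPlus (a b c : ℝ) : ℝ := (b + Real.sqrt (b ^ 2 + 24 * a * c)) / (4 * c)

/-- `J(Q) = (a − c|Q|²)Q + bQ² − (b/3)|Q|² Id`. -/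
def Jmap (a b c : ℝ) (Q : Mat) : Mat :=
  (a - c * mnormSq Q) • Q + b • (Q * Q) - (b / 3 * mnormSq Q) • (1 : Mat)

/-- The bulk energy `f_B(Q) = −(a/2)|Q|² − (b/3)tr(Q³) + (c/4)|Q|⁴`. -/
def fB (a b c : ℝ) (Q : Mat) : ℝ :=
  -(a / 2) * mnormSq Q - b / 3 * (Q * Q * Q).trace + c / 4 * mnormSq Q ^ 2

/-- The normalized (nonnegative) bulk energy `f̃_B`. -/
def ftB (a b c : ℝ) (Q : Mat) : ℝ :=
  fB a b c Q + a * sPlus a b c ^ 2 / 3 + 2 * b * sPlus a b c ^ 3 / 27 - c * sPlus a b c ^ 4 / 9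

/-- The limit manifold `𝒩 = { s₊(n⊗n − Id/3) : |n| = 1 }`. -/
def NSet (a b c : ℝ) : Set Mat :=
  {Q | ∃ n : Vec3, n ⬝ᵥ n = 1 ∧ Q = sPlus a b c • (vecMulVec n n - (1 / 3 : ℝ) • (1 : Mat))}

/-- The space `𝒬₀` of symmetric traceless 3×3 matrices, as a submodule. -/
def Q0 : Submodule ℝ Mat where
  carrier := {A | A.IsSymm ∧ A.trace = 0}
  add_mem' := by
    rintro A B ⟨hA1, hA2⟩ ⟨hB1, hB2⟩
    exact ⟨hA1.add hB1, by simp [Matrix.trace_add, hA2, hB2]⟩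
  zero_mem' := ⟨by simp [Matrix.IsSymm], by simp⟩
  smul_mem' := by
    rintro r A ⟨hA1, hA2⟩
    refine ⟨?_, by simp [Matrix.trace_smul, hA2]⟩
    unfold Matrix.IsSymm
    rw [Matrix.transpose_smul, hA1]

/-- Distance (in Frobenius norm) from `Q` to the manifold `𝒩`. -/
def distN (a b c : ℝ) (Q : Mat) : ℝ :=
  sInf ((fun P => Real.sqrt (mnormSq (Q - P))) '' NSet a b c)


lemma frob_vmv (x y z w : Vec3) :
    frob (vecMulVec x y) (vecMulVec z w) = (x ⬝ᵥ z) * (y ⬝ᵥ w) := by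
  unfold frob dotProduct
  rw [Finset.sum_mul_sum]
  exact Finset.sum_congr rfl fun i _ => Finset.sum_congr rfl fun j _ => by
    simp [Matrix.vecMulVec_apply]; ring

lemma frob_one_vmv (x y : Vec3) : frob 1 (vecMulVec x y) = x ⬝ᵥ y := by
  simp [frob, Matrix.vecMulVec_apply, Matrix.one_apply, dotProduct, ite_mul]

lemma vmv_mul (x y z w : Vec3) :
    vecMulVec x y * vecMulVec z w = (y ⬝ᵥ z) • vecMulVec x w := by
  ext i j
  simp only [Matrix.mul_apply, Matrix.vecMulVec_apply, Matrix.smul_apply, dotProduct,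
    smul_eq_mul, Finset.sum_mul]
  exact Finset.sum_congr rfl fun k _ => by ring

lemma vmv_transpose (x y : Vec3) : (vecMulVec x y)ᵀ = vecMulVec y x := by
  ext i j; simp [Matrix.vecMulVec_apply, mul_comm]

lemma trace_vmv (x y : Vec3) : (vecMulVec x y).trace = x ⬝ᵥ y := by
  simp [Matrix.trace, Matrix.diag, Matrix.vecMulVec_apply, dotProduct]

lemma frob_add_left (A B C : Mat) : frob (A + B) C = frob A C + frob B C := by
  simp [frob, add_mul, Finset.sum_add_distrib]
lemma frob_sub_left (A B C : Mat) : frob (A - B) C = frob A C - frob B C := by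
  simp [frob, sub_mul, Finset.sum_sub_distrib]
lemma frob_smul_left (r : ℝ) (A B : Mat) : frob (r • A) B = r * frob A B := by
  simp [frob, Finset.mul_sum, mul_assoc]
lemma frob_add_right (A B C : Mat) : frob A (B + C) = frob A B + frob A C := by
  simp [frob, mul_add, Finset.sum_add_distrib]
lemma frob_smul_right (r : ℝ) (A B : Mat) : frob A (r • B) = r * frob A B := by
  simp [frob, Finset.mul_sum]
  exact Finset.sum_congr rfl fun i _ => Finset.sum_congr rfl fun j _ => by ring

/-- For `Q ∈ 𝒬₀` with spectral decomposition `Q = Σ λᵢ nᵢ⊗nᵢ` (trace-free),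
`J(Q)` is symmetric traceless and is Frobenius-orthogonal to the tangent space
`T_P𝒩 = { n₃⊗v + v⊗n₃ : v·n₃ = 0 }` at `P = s₊(n₃⊗n₃ − Id/3)`. -/
theorem Jmap_orthogonal_tangent
    (a b c : ℝ) (ha : 0 < a) (hb : 0 < b) (hc : 0 < c)
    (n : Fin 3 → Vec3)
    (hn : ∀ i j : Fin 3, n i ⬝ᵥ n j = if i = j then 1 else 0)
    (l1 l2 l3 : ℝ) (hsum : l1 + l2 + l3 = 0)
    (Q : Mat)
    (hQ : Q = l1 • vecMulVec (n 0) (n 0) + l2 • vecMulVec (n 1) (n 1)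
        + l3 • vecMulVec (n 2) (n 2)) :
    Jmap a b c Q ∈ Q0 ∧
      ∀ v : Vec3, v ⬝ᵥ n 2 = 0 →
        frob (Jmap a b c Q) (vecMulVec (n 2) v + vecMulVec v (n 2)) = 0 := by
  have h00 : n 0 ⬝ᵥ n 0 = 1 := by simpa using hn 0 0
  have h11 : n 1 ⬝ᵥ n 1 = 1 := by simpa using hn 1 1
  have h22 : n 2 ⬝ᵥ n 2 = 1 := by simpa using hn 2 2
  have h01 : n 0 ⬝ᵥ n 1 = 0 := by simpa using hn 0 1
  have h02 : n 0 ⬝ᵥ n 2 = 0 := by simpa using hn 0 2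
  have h10 : n 1 ⬝ᵥ n 0 = 0 := by simpa using hn 1 0
  have h12 : n 1 ⬝ᵥ n 2 = 0 := by simpa using hn 1 2
  have h20 : n 2 ⬝ᵥ n 0 = 0 := by simpa using hn 2 0
  have h21 : n 2 ⬝ᵥ n 1 = 0 := by simpa using hn 2 1
  have hQQ : Q * Q = (l1 * l1) • vecMulVec (n 0) (n 0)
      + (l2 * l2) • vecMulVec (n 1) (n 1) + (l3 * l3) • vecMulVec (n 2) (n 2) := by
    rw [hQ]
    simp only [add_mul, mul_add, smul_mul_assoc, Matrix.mul_smul, vmv_mul,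
      h00, h11, h22, h01, h02, h10, h12, h20, h21, smul_smul, zero_smul, one_smul,
      smul_zero, add_zero, zero_add]
  have hm : mnormSq Q = l1 * l1 + l2 * l2 + l3 * l3 := by
    rw [mnormSq, hQ]
    simp [frob_add_left, frob_add_right, frob_smul_left, frob_smul_right, frob_vmv,
      h00, h11, h22, h01, h02, h10, h12, h20, h21]
  have hQsym : Qᵀ = Q := by
    rw [hQ]
    simp [Matrix.transpose_add, Matrix.transpose_smul, vmv_transpose]
  constructor
  · constructor
    · show (Jmap a b c Q)ᵀ = Jmap a b c Q
      unfold Jmap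
      simp [Matrix.transpose_add, Matrix.transpose_sub, Matrix.transpose_smul,
        Matrix.transpose_mul, hQsym]
    · have htrQ : Q.trace = 0 := by
        rw [hQ]
        simp [Matrix.trace_add, Matrix.trace_smul, trace_vmv, h00, h11, h22]
        linarith
      have htrQQ : (Q * Q).trace = l1 * l1 + l2 * l2 + l3 * l3 := by
        rw [hQQ]
        simp [Matrix.trace_add, Matrix.trace_smul, trace_vmv, h00, h11, h22]
      unfold Jmap
      rw [Matrix.trace_sub, Matrix.trace_add, Matrix.trace_smul, Matrix.trace_smul,
        Matrix.trace_smul, htrQ, htrQQ, Matrix.trace_one, hm]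
      simp only [smul_eq_mul, Fintype.card_fin, smul_zero]
      push_cast
      ring
  · intro v hv
    have hv2 : n 2 ⬝ᵥ v = 0 := by rwa [dotProduct_comm]
    unfold Jmap
    rw [hm, hQQ, hQ]
    simp [frob_add_left, frob_sub_left, frob_smul_left, frob_add_right, frob_smul_right,
      frob_vmv, frob_one_vmv, h00, h11, h22, h01, h02, h10, h12, h20, h21, hv, hv2]
end
end

section
/- Define H, G : ℝ² → ℝ by H(x,y) = −a(x² + y² + xy) + b(x²y + xy²) + c(x² + y² + xy)² + a s₊²/3 + 2b s₊³/27 − c s₊⁴/9 and G(x,y) = (x + s₊/3)² + (y + s₊/3)² + (x + y + 2s₊/3)². Then there exists δ > 0 such that for all (x,y) ∈ ℝ² with 0 < G(x,y) ≤ δ one has (b s₊/12) G(x,y) ≤ H(x,y) ≤ (3a + 3b s₊/4) G(x,y). -/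
open Matrix Finset

noncomputable section

/-- `H(x,y)`: the normalized bulk energy in the eigenvalue variables. -/
def Hfun (a b c : ℝ) (x y : ℝ) : ℝ :=
  -a * (x ^ 2 + y ^ 2 + x * y) + b * (x ^ 2 * y + x * y ^ 2)
    + c * (x ^ 2 + y ^ 2 + x * y) ^ 2
    + a * sPlus a b c ^ 2 / 3 + 2 * b * sPlus a b c ^ 3 / 27 - c * sPlus a b c ^ 4 / 9

/-- `G(x,y)`: the squared distance of the eigenvalue triple to the minimizing one. -/
def Gfun (a b c : ℝ) (x y : ℝ) : ℝ :=
  (x + sPlus a b c / 3) ^ 2 + (y + sPlus a b c / 3) ^ 2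
    + (x + y + 2 * sPlus a b c / 3) ^ 2

/-! `s₊` is the positive root of `2cs² = bs + 3a`. In the shifted variables `u = x + s₊/3`,
`v = y + s₊/3` this relation kills the constant and linear terms of `H`, leaving a quadratic form
squeezed between `(b s₊/6) G` and `(3a/2 + b s₊/2) G`, plus cubic and quartic terms of size
`O(√G · G)`. Near the minimum these are absorbed by half of the lower margin `b s₊/6`. -/

lemma sPlus_pos {a b c : ℝ} (hb : 0 < b) (hc : 0 < c) : 0 < sPlus a b c := by
  unfold sPlus
  positivity

lemma two_mul_mul_sPlus_sq {a b c : ℝ} (hc : c ≠ 0) (hdisc : 0 ≤ b ^ 2 + 24 * a * c) :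
    2 * c * sPlus a b c ^ 2 = b * sPlus a b c + 3 * a := by
  have hsqrt := Real.sq_sqrt hdisc
  unfold sPlus
  generalize √(b ^ 2 + 24 * a * c) = r at hsqrt
  field_simp
  linear_combination 2 * hsqrt

lemma Hfun_sub_third {a b c : ℝ} (hs : 2 * c * sPlus a b c ^ 2 = b * sPlus a b c + 3 * a)
    (u v : ℝ) :
    Hfun a b c (u - sPlus a b c / 3) (v - sPlus a b c / 3) =
      3 * a / 2 * (u + v) ^ 2 + b * sPlus a b c / 2 * (u ^ 2 + v ^ 2)
        + (u + v) * (b * (u * v) - 2 * c * sPlus a b c * (u ^ 2 + u * v + v ^ 2))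
        + c * (u ^ 2 + u * v + v ^ 2) ^ 2 := by
  unfold Hfun
  linear_combination
    ((u ^ 2 + u * v + v ^ 2 - sPlus a b c * (u + v) + 3 / 2 * (u + v) ^ 2) / 3) * hs

lemma Gfun_sub_third (a b c u v : ℝ) :
    Gfun a b c (u - sPlus a b c / 3) (v - sPlus a b c / 3) = u ^ 2 + v ^ 2 + (u + v) ^ 2 := by
  unfold Gfun
  ring

section ShiftedVariables

variable {u v : ℝ}

lemma quadratic_form_bounds {a β : ℝ} (ha : 0 ≤ a) (hβ : 0 ≤ β) :
    β / 6 * (u ^ 2 + v ^ 2 + (u + v) ^ 2)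
        ≤ 3 * a / 2 * (u + v) ^ 2 + β / 2 * (u ^ 2 + v ^ 2) ∧
      3 * a / 2 * (u + v) ^ 2 + β / 2 * (u ^ 2 + v ^ 2)
        ≤ (3 * a / 2 + β / 2) * (u ^ 2 + v ^ 2 + (u + v) ^ 2) := by
  constructor
  · nlinarith [mul_nonneg hβ (sq_nonneg (u - v)), mul_nonneg ha (sq_nonneg (u + v))]
  · nlinarith [mul_nonneg ha (add_nonneg (sq_nonneg u) (sq_nonneg v)),
      mul_nonneg hβ (sq_nonneg (u + v))]

lemma abs_higher_order_le {b c s ε : ℝ} (hb : 0 ≤ b) (hc : 0 ≤ c) (hs : 0 ≤ s)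
    (hε₀ : 0 ≤ ε) (hε₁ : ε ≤ 1) (hG : u ^ 2 + v ^ 2 + (u + v) ^ 2 ≤ ε ^ 2) :
    |(u + v) * (b * (u * v) - 2 * c * s * (u ^ 2 + u * v + v ^ 2))
        + c * (u ^ 2 + u * v + v ^ 2) ^ 2|
      ≤ ε * (b / 2 + c * s + c / 4) * (u ^ 2 + v ^ 2 + (u + v) ^ 2) := by
  set G := u ^ 2 + v ^ 2 + (u + v) ^ 2
  have hG₀ : 0 ≤ G := by positivity
  have hP : u ^ 2 + u * v + v ^ 2 = G / 2 := by ring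
  have hw : |u + v| ≤ ε := abs_le_of_sq_le_sq (by nlinarith [sq_nonneg u, sq_nonneg v]) hε₀
  have hcubic : |b * (u * v) - 2 * c * s * (u ^ 2 + u * v + v ^ 2)| ≤ (b / 2 + c * s) * G := by
    have huv : |u * v| ≤ G / 2 := by
      rw [abs_le]; constructor <;> nlinarith [sq_nonneg (u - v), sq_nonneg (u + v)]
    calc |b * (u * v) - 2 * c * s * (u ^ 2 + u * v + v ^ 2)|
        ≤ b * |u * v| + c * s * G := by
          rw [hP, abs_le]
          constructor <;> nlinarith [mul_le_mul_of_nonneg_left (le_abs_self (u * v)) hb,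
            mul_le_mul_of_nonneg_left (neg_abs_le (u * v)) hb, mul_nonneg (mul_nonneg hc hs) hG₀]
      _ ≤ (b / 2 + c * s) * G := by nlinarith [mul_le_mul_of_nonneg_left huv hb]
  -- `G ≤ ε² ≤ ε` makes the quartic term as small as the cubic one.
  have hquartic : c * (u ^ 2 + u * v + v ^ 2) ^ 2 ≤ ε * (c / 4) * G := by
    rw [hP]
    have hGε : G ≤ ε := hG.trans (by nlinarith)
    nlinarith [mul_le_mul_of_nonneg_left hGε (mul_nonneg hc hG₀)]
  calc _ ≤ |(u + v) * (b * (u * v) - 2 * c * s * (u ^ 2 + u * v + v ^ 2))|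
        + |c * (u ^ 2 + u * v + v ^ 2) ^ 2| := abs_add_le _ _
    _ = |u + v| * |b * (u * v) - 2 * c * s * (u ^ 2 + u * v + v ^ 2)|
        + c * (u ^ 2 + u * v + v ^ 2) ^ 2 := by
        rw [abs_mul, abs_of_nonneg (mul_nonneg hc (sq_nonneg _))]
    _ ≤ ε * ((b / 2 + c * s) * G) + ε * (c / 4) * G :=
        add_le_add (mul_le_mul hw hcubic (abs_nonneg _) hε₀) hquartic
    _ = _ := by ring

end ShiftedVariables

/-- Near the minimizing eigenvalues, `H` is comparable to `G`:
`(b s₊/12) G ≤ H ≤ (3a + 3b s₊/4) G` whenever `0 < G ≤ δ`. -/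
theorem Hfun_comparable_Gfun
    (a b c : ℝ) (ha : 0 < a) (hb : 0 < b) (hc : 0 < c) :
    ∃ δ > 0, ∀ x y : ℝ, 0 < Gfun a b c x y → Gfun a b c x y ≤ δ →
      b * sPlus a b c / 12 * Gfun a b c x y ≤ Hfun a b c x y ∧
        Hfun a b c x y ≤ (3 * a + 3 * b * sPlus a b c / 4) * Gfun a b c x y := by
  have hs := sPlus_pos (a := a) hb hc
  have hs₂ := two_mul_mul_sPlus_sq (a := a) (b := b) hc.ne' (by positivity)
  have hH := Hfun_sub_third hs₂
  have hG := Gfun_sub_third a b c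
  set s := sPlus a b c
  set ε := min 1 (b * s / (12 * (b / 2 + c * s + c / 4)))
  have hε : 0 < ε := lt_min one_pos (by positivity)
  have hεM : ε * (b / 2 + c * s + c / 4) ≤ b * s / 12 :=
    (le_div_iff₀ (by positivity)).1 ((min_le_right _ _).trans_eq (by field_simp))
  refine ⟨ε ^ 2, by positivity, fun x y _ hGδ => ?_⟩
  obtain ⟨u, rfl⟩ : ∃ u, x = u - s / 3 := ⟨x + s / 3, by ring⟩
  obtain ⟨v, rfl⟩ : ∃ v, y = v - s / 3 := ⟨y + s / 3, by ring⟩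
  rw [hG] at hGδ ⊢
  rw [hH]
  have hG₀ : 0 ≤ u ^ 2 + v ^ 2 + (u + v) ^ 2 := by positivity
  obtain ⟨hquad₁, hquad₂⟩ :=
    quadratic_form_bounds (u := u) (v := v) ha.le (mul_nonneg hb.le hs.le)
  obtain ⟨hR₁, hR₂⟩ :=
    abs_le.1 <| abs_higher_order_le hb.le hc.le hs.le hε.le (min_le_left _ _) hGδ
  have hmargin := mul_le_mul_of_nonneg_right hεM hG₀
  constructor <;> linarith [mul_nonneg ha.le hG₀]
end
end

section
/- Let U ⊆ ℝ³ be open, let n : U → ℝ³ be differentiable with |n(x)| = 1 for all x ∈ U, let φ : U → ℝ³ be differentiable, and define Q : U → 𝒬₀ by Q(x) = s₊(n(x)⊗n(x) − Id/3). Then at every point of U, Σ_k ∂_k Q : ∂_k(n⊗φ + φ⊗n) = 2 s₊ ( |∇n|² (n·φ) + Σ_k ∂_k n · ∂_k φ ), where |∇n|² = Σ_{k,i} (∂_k n_i)². -/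
open Matrix Finset

noncomputable section

/-- Spatial partial derivative `∂_k f`. -/
def pd (k : Fin 3) (f : Vec3 → ℝ) : Vec3 → ℝ := fun x => fderiv ℝ f x (Pi.single k 1)

/-! Differentiating `n · n = 1` gives `n · ∂ₖn = 0`. Since `∂ₖQ = s (∂ₖn ⊗ n + n ⊗ ∂ₖn)`,
expanding its contraction with `∂ₖ(n ⊗ φ + φ ⊗ n)` yields eight products of dot products; the four
containing `n · ∂ₖn` vanish and the rest, using `n · n = 1`, add up to
`2 s (|∂ₖn|² (n · φ) + ∂ₖn · ∂ₖφ)`. -/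

theorem sum_sum_symm_outer_mul_of_unit {ι : Type*} [Fintype ι] (a a' b b' : ι → ℝ)
    (ha : a ⬝ᵥ a = 1) (haa' : a ⬝ᵥ a' = 0) :
    ∑ i, ∑ j, (a' i * a j + a i * a' j) * (a' i * b j + a i * b' j + (b' i * a j + b i * a' j))
      = 2 * ((a' ⬝ᵥ a') * (a ⬝ᵥ b) + a' ⬝ᵥ b') := by
  have hexpand : ∀ i j,
      (a' i * a j + a i * a' j) * (a' i * b j + a i * b' j + (b' i * a j + b i * a' j))
      = a' i * a' i * (a j * b j) + a i * a' i * (a j * b' j) + a' i * b' i * (a j * a j)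
        + a' i * b i * (a j * a' j) + a i * a' i * (a' j * b j) + a i * a i * (a' j * b' j)
        + a i * b' i * (a j * a' j) + a i * b i * (a' j * a' j) := fun i j => by ring
  simp only [hexpand, sum_add_distrib, ← sum_mul_sum]
  simp only [dotProduct] at ha haa' ⊢
  rw [ha, haa']
  ring

section PartialDerivatives

variable {x : Vec3} {f g : Vec3 → ℝ} (k : Fin 3)

theorem pd_add (hf : DifferentiableAt ℝ f x) (hg : DifferentiableAt ℝ g x) :
    pd k (fun y => f y + g y) x = pd k f x + pd k g x := by
  simp [pd, fderiv_fun_add hf hg]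

theorem pd_mul (hf : DifferentiableAt ℝ f x) (hg : DifferentiableAt ℝ g x) :
    pd k (fun y => f y * g y) x = pd k f x * g x + f x * pd k g x := by
  simp only [pd, fderiv_fun_mul hf hg, _root_.add_apply, _root_.smul_apply, smul_eq_mul]
  ring

theorem pd_const_mul_sub_const (s c : ℝ) :
    pd k (fun y => s * (f y - c)) x = s * pd k f x := by
  change fderiv ℝ (s • fun y => f y - c) x _ = _
  rw [fderiv_const_smul_field]
  simp [pd, fderiv_sub_const]

theorem pd_sum {ι : Type*} (t : Finset ι) {F : ι → Vec3 → ℝ}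
    (hF : ∀ i ∈ t, DifferentiableAt ℝ (F i) x) :
    pd k (fun y => ∑ i ∈ t, F i y) x = ∑ i ∈ t, pd k (F i) x := by
  simp [pd, fderiv_fun_sum hF]

theorem pd_eq_zero_of_eventuallyEq_const {c : ℝ} (hf : f =ᶠ[nhds x] fun _ => c) :
    pd k f x = 0 := by
  simp [pd, hf.fderiv_eq]

variable {ι : Type*} {u v : Vec3 → ι → ℝ}

theorem pd_vecMulVec_apply (hu : DifferentiableAt ℝ u x) (hv : DifferentiableAt ℝ v x)
    (i j : ι) :
    pd k (fun y => vecMulVec (u y) (v y) i j) x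
      = pd k (fun y => u y i) x * v x j + u x i * pd k (fun y => v y j) x := by
  simp only [vecMulVec_apply]
  exact pd_mul k (differentiableAt_pi.1 hu i) (differentiableAt_pi.1 hv j)

theorem differentiableAt_vecMulVec_apply (hu : DifferentiableAt ℝ u x)
    (hv : DifferentiableAt ℝ v x) (i j : ι) :
    DifferentiableAt ℝ (fun y => vecMulVec (u y) (v y) i j) x :=
  (differentiableAt_pi.1 hu i).mul (differentiableAt_pi.1 hv j)

variable [Fintype ι]

theorem pd_dotProduct (hu : DifferentiableAt ℝ u x) (hv : DifferentiableAt ℝ v x) :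
    pd k (fun y => u y ⬝ᵥ v y) x
      = ∑ i, (pd k (fun y => u y i) x * v x i + u x i * pd k (fun y => v y i) x) := by
  rw [← sum_congr rfl fun i _ =>
    pd_mul k (differentiableAt_pi.1 hu i) (differentiableAt_pi.1 hv i)]
  exact pd_sum k univ fun i _ =>
    (differentiableAt_pi.1 hu i).mul (differentiableAt_pi.1 hv i)

theorem dotProduct_pd_eq_zero_of_eventually_dotProduct_self_eq {c : ℝ}
    (hu : DifferentiableAt ℝ u x) (hc : ∀ᶠ y in nhds x, u y ⬝ᵥ u y = c) :
    u x ⬝ᵥ (fun i => pd k (fun y => u y i) x) = 0 := by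
  have h := pd_eq_zero_of_eventuallyEq_const k hc
  simp only [pd_dotProduct k hu hu, mul_comm (pd k _ x), ← two_mul, ← mul_sum] at h
  simp only [dotProduct]
  linear_combination (1 / 2 : ℝ) * h

end PartialDerivatives

theorem gradQ_contract_grad_nphi_general
    (s : ℝ)
    (U : Set Vec3) (hU : IsOpen U)
    (n : Vec3 → Vec3) (φ : Vec3 → Vec3)
    (hn : ∀ x ∈ U, DifferentiableAt ℝ n x)
    (hφ : ∀ x ∈ U, DifferentiableAt ℝ φ x)
    (hunit : ∀ x ∈ U, n x ⬝ᵥ n x = 1) :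
    ∀ x ∈ U,
      (∑ k : Fin 3, ∑ i : Fin 3, ∑ j : Fin 3,
          pd k (fun y => (s • (vecMulVec (n y) (n y) - (1 / 3 : ℝ) • (1 : Mat))) i j) x
            * pd k (fun y => (vecMulVec (n y) (φ y) + vecMulVec (φ y) (n y)) i j) x)
        = 2 * s *
            ((∑ k : Fin 3, ∑ i : Fin 3, pd k (fun y => n y i) x ^ 2) * (n x ⬝ᵥ φ x)
              + ∑ k : Fin 3, ∑ i : Fin 3,
                  pd k (fun y => n y i) x * pd k (fun y => φ y i) x) := by
  intro x hx
  have hnx := hn x hx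
  have hφx := hφ x hx
  have hn_perp (k : Fin 3) : n x ⬝ᵥ (fun i => pd k (fun y => n y i) x) = 0 :=
    dotProduct_pd_eq_zero_of_eventually_dotProduct_self_eq k hnx
      (Filter.eventually_of_mem (hU.mem_nhds hx) hunit)
  simp only [Matrix.smul_apply, Matrix.sub_apply, Matrix.add_apply, smul_eq_mul,
    pd_const_mul_sub_const, pd_add _ (differentiableAt_vecMulVec_apply hnx hφx _ _)
      (differentiableAt_vecMulVec_apply hφx hnx _ _),
    pd_vecMulVec_apply _ hnx hnx, pd_vecMulVec_apply _ hnx hφx, pd_vecMulVec_apply _ hφx hnx]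
  set dn := fun k i => pd k (fun y => n y i) x
  set dφ := fun k i => pd k (fun y => φ y i) x
  calc _ = ∑ k, s * (2 * ((dn k ⬝ᵥ dn k) * (n x ⬝ᵥ φ x) + dn k ⬝ᵥ dφ k)) :=
        sum_congr rfl fun k _ => by
          rw [← sum_sum_symm_outer_mul_of_unit _ _ _ _ (hunit x hx) (hn_perp k)]
          simp only [mul_sum, mul_assoc]
          rfl
    _ = 2 * s * ∑ k, ((dn k ⬝ᵥ dn k) * (n x ⬝ᵥ φ x) + dn k ⬝ᵥ dφ k) := by
        rw [mul_sum]
        exact sum_congr rfl fun k _ => by ring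
    _ = _ := by simp only [sum_add_distrib, ← sum_mul, dotProduct, sq]; rfl

/-- For a differentiable unit vector field `n`, a differentiable vector field `φ`
on an open `U ⊆ ℝ³`, and `Q = s₊(n⊗n − Id/3)`:
`Σ_k ∂_kQ : ∂_k(n⊗φ + φ⊗n) = 2 s₊ (|∇n|² (n·φ) + Σ_k ∂_k n · ∂_k φ)` on `U`. -/
theorem gradQ_contract_grad_nphi
    (s : ℝ) (hs : 0 < s)
    (U : Set Vec3) (hU : IsOpen U)
    (n : Vec3 → Vec3) (φ : Vec3 → Vec3)
    (hn : ∀ x ∈ U, DifferentiableAt ℝ n x)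
    (hφ : ∀ x ∈ U, DifferentiableAt ℝ φ x)
    (hunit : ∀ x ∈ U, n x ⬝ᵥ n x = 1) :
    ∀ x ∈ U,
      (∑ k : Fin 3, ∑ i : Fin 3, ∑ j : Fin 3,
          pd k (fun y => (s • (vecMulVec (n y) (n y) - (1 / 3 : ℝ) • (1 : Mat))) i j) x
            * pd k (fun y => (vecMulVec (n y) (φ y) + vecMulVec (φ y) (n y)) i j) x)
        = 2 * s *
            ((∑ k : Fin 3, ∑ i : Fin 3, pd k (fun y => n y i) x ^ 2) * (n x ⬝ᵥ φ x)
              + ∑ k : Fin 3, ∑ i : Fin 3,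
                  pd k (fun y => n y i) x * pd k (fun y => φ y i) x) :=
  gradQ_contract_grad_nphi_general s U hU n φ hn hφ hunit
end
end
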